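/- arXiv:1303.0781 — 2 statements merged into one kernel-verified Lean document; each statement's English description precedes it below -/
import Mathlib

section
/- Let W = [[A₁, αB₁₂],[αB₁₂ᵀ, A₂]] be a symmetric 2N×2N matrix, x and y unit principal eigenvectors of A₁ and A₂ respectively, and ξ = α·xᵀB₁₂y. Then λ₁(W) ≥ max(λ₁(A₁), λ₁(A₂)) + (√(((λ₁(A₁)−λ₁(A₂))/2)² + ξ²) − |λ₁(A₁)−λ₁(A₂)|/2). -/
/-!
Test `W` against the vectors `(c x, s y)`: their Rayleigh quotient is that of the `2 × 2` matrix
`[[a, ξ], [ξ, b]]` at `(c, s)`, where `a = λ₁(A₁)` and `b = λ₁(A₂)`, and the claimed lower bound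
is the largest eigenvalue `(a + b)/2 + √(((a - b)/2)² + ξ²)` of that matrix. Since
`W ≤ λ₁(W) • 1` in the Loewner order, every Rayleigh quotient of `W` is at most `λ₁(W)`.
-/

open Matrix

/-- The largest eigenvalue (spectral supremum) of a real matrix. -/
noncomputable def lam1 {n : Type*} [Fintype n] [DecidableEq n]
    (M : Matrix n n ℝ) : ℝ :=
  sSup (spectrum ℝ M)

open scoped MatrixOrder in
theorem dotProduct_mulVec_le_lam1_mul {n : Type*} [Fintype n] [DecidableEq n]
    {M : Matrix n n ℝ} (hM : M.IsHermitian) (v : n → ℝ) :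
    v ⬝ᵥ (M *ᵥ v) ≤ lam1 M * (v ⬝ᵥ v) := by
  have hle : M ≤ algebraMap ℝ _ (lam1 M) :=
    le_algebraMap_of_spectrum_le (fun _ h ↦ le_csSup finite_real_spectrum.bddAbove h) hM
  simpa [sub_mulVec, dotProduct_sub, sub_nonneg, Algebra.algebraMap_eq_smul_one, smul_mulVec,
    mul_comm] using (le_iff.mp hle).dotProduct_mulVec_nonneg v

theorem sumElim_dotProduct_fromBlocks_mulVec {m n α : Type*} [Fintype m] [Fintype n]
    [NonUnitalNonAssocSemiring α] (A : Matrix m m α) (B : Matrix m n α) (C : Matrix n m α)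
    (D : Matrix n n α) (u : m → α) (v : n → α) :
    Sum.elim u v ⬝ᵥ (fromBlocks A B C D *ᵥ Sum.elim u v) =
      u ⬝ᵥ (A *ᵥ u) + u ⬝ᵥ (B *ᵥ v) + (v ⬝ᵥ (C *ᵥ u) + v ⬝ᵥ (D *ᵥ v)) := by
  simp only [fromBlocks_mulVec, sumElim_dotProduct_sumElim, Sum.elim_comp_inl, Sum.elim_comp_inr,
    dotProduct_add]

theorem sumElim_smul_dotProduct_fromBlocks_transpose_mulVec {m n R : Type*} [Fintype m]
    [Fintype n] [CommRing R] {A : Matrix m m R} {D : Matrix n n R} (B : Matrix m n R) {a b : R}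
    {x : m → R} {y : n → R} (hx : x ⬝ᵥ x = 1) (hy : y ⬝ᵥ y = 1)
    (hxe : A *ᵥ x = a • x) (hye : D *ᵥ y = b • y) (c s : R) :
    Sum.elim (c • x) (s • y) ⬝ᵥ (fromBlocks A B Bᵀ D *ᵥ Sum.elim (c • x) (s • y)) =
      c ^ 2 * a + 2 * c * s * (x ⬝ᵥ (B *ᵥ y)) + s ^ 2 * b := by
  have hBt : y ⬝ᵥ (Bᵀ *ᵥ x) = x ⬝ᵥ (B *ᵥ y) := by
    rw [dotProduct_mulVec, vecMul_transpose, dotProduct_comm]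
  simp only [sumElim_dotProduct_fromBlocks_mulVec, mulVec_smul, hxe, hye, hBt, dotProduct_smul,
    smul_dotProduct, hx, hy, smul_eq_mul]
  ring

theorem add_half_sqrt_le_of_forall_quadForm_le {a b ξ L : ℝ}
    (h : ∀ c s : ℝ, c ^ 2 * a + 2 * c * s * ξ + s ^ 2 * b ≤ L * (c ^ 2 + s ^ 2)) :
    (a + b) / 2 + √(((a - b) / 2) ^ 2 + ξ ^ 2) ≤ L := by
  set μ := (a + b) / 2 + √(((a - b) / 2) ^ 2 + ξ ^ 2)
  -- `μ` is the larger root of `(t - a) (t - b) = ξ²`, with eigenvector `(ξ, μ - a)`.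
  have hμ : ξ ^ 2 = (μ - a) * (μ - b) := by
    have := Real.sq_sqrt (by positivity : 0 ≤ ((a - b) / 2) ^ 2 + ξ ^ 2)
    linear_combination -this
  have heigen := h ξ (μ - a)
  rcases (add_nonneg (sq_nonneg ξ) (sq_nonneg (μ - a))).eq_or_lt with h0 | hpos
  · have hμa : μ = a := by nlinarith
    simpa [hμa] using h 1 0
  · refine le_of_mul_le_mul_right ?_ hpos
    linear_combination heigen - (μ - a) * hμ

theorem stmt6_general {N : ℕ} (A1 A2 B12 : Matrix (Fin N) (Fin N) ℝ)
    (hA1 : A1.IsSymm) (hA2 : A2.IsSymm) (α : ℝ)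
    (x y : Fin N → ℝ) (hx : x ⬝ᵥ x = 1) (hy : y ⬝ᵥ y = 1)
    (hxe : A1 *ᵥ x = lam1 A1 • x) (hye : A2 *ᵥ y = lam1 A2 • y) :
    max (lam1 A1) (lam1 A2) +
        (Real.sqrt (((lam1 A1 - lam1 A2) / 2) ^ 2 + (α * (x ⬝ᵥ (B12 *ᵥ y))) ^ 2) -
          |lam1 A1 - lam1 A2| / 2) ≤
      lam1 (Matrix.fromBlocks A1 (α • B12) (α • B12ᵀ) A2) := by
  have hW : (fromBlocks A1 (α • B12) (α • B12ᵀ) A2).IsHermitian :=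
    .fromBlocks (isHermitian_iff_isSymm.mpr hA1) (by simp) (isHermitian_iff_isSymm.mpr hA2)
  have hquad : ∀ c s : ℝ, c ^ 2 * lam1 A1 + 2 * c * s * (α * (x ⬝ᵥ (B12 *ᵥ y))) +
      s ^ 2 * lam1 A2 ≤ lam1 (fromBlocks A1 (α • B12) (α • B12ᵀ) A2) * (c ^ 2 + s ^ 2) := by
    intro c s
    have hnorm : Sum.elim (c • x) (s • y) ⬝ᵥ Sum.elim (c • x) (s • y) = c ^ 2 + s ^ 2 := by
      simp only [sumElim_dotProduct_sumElim, dotProduct_smul, smul_dotProduct, hx, hy,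
        smul_eq_mul]
      ring
    have := dotProduct_mulVec_le_lam1_mul hW (Sum.elim (c • x) (s • y))
    rwa [← transpose_smul, sumElim_smul_dotProduct_fromBlocks_transpose_mulVec _ hx hy hxe hye,
      hnorm, smul_mulVec, dotProduct_smul, smul_eq_mul, transpose_smul] at this
  calc _ = (lam1 A1 + lam1 A2) / 2 +
        √(((lam1 A1 - lam1 A2) / 2) ^ 2 + (α * (x ⬝ᵥ (B12 *ᵥ y))) ^ 2) := by
        linarith [min_add_max (lam1 A1) (lam1 A2), max_sub_min_eq_abs' (lam1 A1) (lam1 A2)]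
    _ ≤ _ := add_half_sqrt_le_of_forall_quadForm_le hquad

theorem stmt6 {N : ℕ} (hN : 0 < N) (A1 A2 B12 : Matrix (Fin N) (Fin N) ℝ)
    (hA1 : A1.IsSymm) (hA2 : A2.IsSymm) (α : ℝ)
    (x y : Fin N → ℝ) (hx : x ⬝ᵥ x = 1) (hy : y ⬝ᵥ y = 1)
    (hxe : A1 *ᵥ x = lam1 A1 • x) (hye : A2 *ᵥ y = lam1 A2 • y) :
    max (lam1 A1) (lam1 A2) +
        (Real.sqrt (((lam1 A1 - lam1 A2) / 2) ^ 2 + (α * (x ⬝ᵥ (B12 *ᵥ y))) ^ 2) -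
          |lam1 A1 - lam1 A2| / 2) ≤
      lam1 (Matrix.fromBlocks A1 (α • B12) (α • B12ᵀ) A2) :=
  stmt6_general A1 A2 B12 hA1 hA2 α x y hx hy hxe hye
end

section
/- For a symmetric real matrix W, a nonzero vector z, an even integer k, and an integer s with 0 < s < k, one has (zᵀWˢz / zᵀz)^{1/s} ≤ (zᵀWᵏz / zᵀz)^{1/k}, provided zᵀWˢz > 0. -/
open Matrix

lemma matConjPowAux {n : Type*} [Fintype n] [DecidableEq n] (A D B : Matrix n n ℝ)
    (hBA : B * A = 1) (hAB : A * B = 1) (m : ℕ) :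
    (A * D * B) ^ m = A * D ^ m * B := by
  induction m with
  | zero => simpa using hAB.symm
  | succ t ih =>
    rw [pow_succ, ih, pow_succ]
    calc A * D ^ t * B * (A * D * B) = A * D ^ t * (B * A) * (D * B) := by noncomm_ring
    _ = A * (D ^ t * D) * B := by rw [hBA]; noncomm_ring

open Finset in
/-- Quadratic forms of powers of a hermitian real matrix decompose over eigenvalues. -/
lemma quad_decomp {N : ℕ} (W : Matrix (Fin N) (Fin N) ℝ) (hH : W.IsHermitian)
    (z : Fin N → ℝ) :
    ∃ lam c : Fin N → ℝ, ∀ m : ℕ,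
      z ⬝ᵥ ((W ^ m) *ᵥ z) = ∑ i, lam i ^ m * c i ^ 2 := by
  set U : Matrix (Fin N) (Fin N) ℝ := (hH.eigenvectorUnitary : Matrix (Fin N) (Fin N) ℝ) with hUdef
  have hU1 : U * star U = 1 := (Matrix.mem_unitaryGroup_iff).mp hH.eigenvectorUnitary.2
  have hU2 : star U * U = 1 := (Matrix.mem_unitaryGroup_iff').mp hH.eigenvectorUnitary.2
  set lam : Fin N → ℝ := hH.eigenvalues with hlamdef
  have hspec' : W = U * diagonal lam * star U := by
    have := hH.spectral_theorem
    simpa [Function.comp_def] using this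
  refine ⟨lam, (star U) *ᵥ z, fun m => ?_⟩
  have hWm : W ^ m = U * diagonal (fun i => lam i ^ m) * star U := by
    calc W ^ m = (U * diagonal lam * star U) ^ m := by rw [← hspec']
    _ = U * (diagonal lam) ^ m * star U := matConjPowAux U (diagonal lam) (star U) hU2 hU1 m
    _ = U * diagonal (fun i => lam i ^ m) * star U := by
        rw [Matrix.diagonal_pow]
        rfl
  rw [hWm]
  rw [← Matrix.mulVec_mulVec, ← Matrix.mulVec_mulVec, Matrix.dotProduct_mulVec,
    ← Matrix.mulVec_transpose]
  have hstar : Uᵀ = star U := by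
    simp [Matrix.star_eq_conjTranspose, Matrix.conjTranspose_eq_transpose_of_trivial]
  rw [hstar]
  simp only [dotProduct, Matrix.mulVec_diagonal]
  exact Finset.sum_congr rfl fun i _ => by ring

open Finset Real in
lemma key_scalar {N : ℕ} (lam c : Fin N → ℝ) (k s : ℕ) (hk : Even k) (hs : 0 < s)
    (hsk : s < k) (hT : 0 < ∑ i, c i ^ 2) (hS : 0 < ∑ i, lam i ^ s * c i ^ 2) :
    ((∑ i, lam i ^ s * c i ^ 2) / (∑ i, c i ^ 2)) ^ ((1 : ℝ) / s) ≤
      ((∑ i, lam i ^ k * c i ^ 2) / (∑ i, c i ^ 2)) ^ ((1 : ℝ) / k) := by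
  set T : ℝ := ∑ i, c i ^ 2 with hTdef
  set S : ℝ := ∑ i, lam i ^ s * c i ^ 2 with hSdef
  set K : ℝ := ∑ i, lam i ^ k * c i ^ 2 with hKdef
  have hkpos : 0 < k := hs.trans hsk
  have hsR : (0 : ℝ) < s := by exact_mod_cast hs
  have hkR : (0 : ℝ) < k := by exact_mod_cast hkpos
  have hK0 : 0 ≤ K := Finset.sum_nonneg fun i _ => by
    have := hk.pow_nonneg (lam i); positivity
  set p : ℝ := (k : ℝ) / s with hpdef
  have hp1 : 1 ≤ p := by
    rw [hpdef, le_div_iff₀ hsR, one_mul]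
    exact_mod_cast hsk.le
  -- weighted Hölder with weights c i ^ 2 and values |lam i| ^ s
  have holder := inner_le_weight_mul_Lp_of_nonneg Finset.univ hp1
    (fun i => c i ^ 2) (fun i => |lam i| ^ s)
    (fun i => by positivity) (fun i => by positivity)
  have hfp : ∀ i : Fin N, ((|lam i| : ℝ) ^ s) ^ p = lam i ^ k := by
    intro i
    rw [← Real.rpow_natCast |lam i| s, ← Real.rpow_mul (abs_nonneg _)]
    have : (s : ℝ) * p = (k : ℝ) := by
      rw [hpdef]; field_simp
    rw [this, Real.rpow_natCast, ← abs_pow, abs_of_nonneg (hk.pow_nonneg (lam i))]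
  have hS' : S ≤ ∑ i, c i ^ 2 * |lam i| ^ s := by
    apply Finset.sum_le_sum
    intro i _
    have h1 : lam i ^ s ≤ |lam i| ^ s := by
      calc lam i ^ s ≤ |lam i ^ s| := le_abs_self _
      _ = |lam i| ^ s := abs_pow _ _
    have h2 : (0 : ℝ) ≤ c i ^ 2 := by positivity
    nlinarith
  have hsum_eq : ∑ i, c i ^ 2 * (fun i => |lam i| ^ s) i ^ p = K := by
    rw [hKdef]
    exact Finset.sum_congr rfl fun i _ => by rw [hfp i]; ring
  have hmain : S ≤ T ^ (1 - p⁻¹) * K ^ p⁻¹ := by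
    calc S ≤ ∑ i, c i ^ 2 * |lam i| ^ s := hS'
    _ ≤ (∑ i, c i ^ 2) ^ (1 - p⁻¹) * (∑ i, c i ^ 2 * (|lam i| ^ s) ^ p) ^ p⁻¹ := holder
    _ = T ^ (1 - p⁻¹) * K ^ p⁻¹ := by rw [← hTdef, hsum_eq]
  -- divide by T
  have hpinv : p⁻¹ = (s : ℝ) / k := by rw [hpdef]; field_simp
  have hdiv : S / T ≤ (K / T) ^ ((s : ℝ) / k) := by
    rw [div_rpow hK0 hT.le, ← hpinv]
    rw [div_le_div_iff₀ hT ((Real.rpow_pos_of_pos hT _))]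
    calc S * T ^ p⁻¹ ≤ (T ^ (1 - p⁻¹) * K ^ p⁻¹) * T ^ p⁻¹ := by
          apply mul_le_mul_of_nonneg_right hmain (Real.rpow_nonneg hT.le _)
    _ = K ^ p⁻¹ * (T ^ (1 - p⁻¹) * T ^ p⁻¹) := by ring
    _ = K ^ p⁻¹ * T := by
          rw [← Real.rpow_add hT, sub_add_cancel, Real.rpow_one]
  have hST : 0 < S / T := div_pos hS hT
  calc (S / T) ^ ((1 : ℝ) / s) ≤ ((K / T) ^ ((s : ℝ) / k)) ^ ((1 : ℝ) / s) := by
        apply Real.rpow_le_rpow hST.le hdiv (by positivity)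
  _ = (K / T) ^ ((1 : ℝ) / k) := by
        rw [← Real.rpow_mul (by positivity)]
        congr 1
        field_simp

theorem stmt8 {N : ℕ} (W : Matrix (Fin N) (Fin N) ℝ) (hW : W.IsSymm)
    (z : Fin N → ℝ) (hz : z ≠ 0) (k s : ℕ) (hk : Even k) (hs : 0 < s)
    (hsk : s < k) (hpos : 0 < z ⬝ᵥ ((W ^ s) *ᵥ z)) :
    (z ⬝ᵥ ((W ^ s) *ᵥ z) / (z ⬝ᵥ z)) ^ ((1 : ℝ) / s) ≤
      (z ⬝ᵥ ((W ^ k) *ᵥ z) / (z ⬝ᵥ z)) ^ ((1 : ℝ) / k) := by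
  have hH : W.IsHermitian := by
    rwa [Matrix.IsHermitian, conjTranspose_eq_transpose_of_trivial]
  obtain ⟨lam, c, hdec⟩ := quad_decomp W hH z
  have hzz : z ⬝ᵥ z = ∑ i, c i ^ 2 := by simpa using hdec 0
  have hT : 0 < ∑ i, c i ^ 2 := by
    rw [← hzz]
    have h0 : (0:ℝ) ≤ z ⬝ᵥ z := Finset.sum_nonneg fun i _ => mul_self_nonneg _
    rcases h0.lt_or_eq with h | h
    · exact h
    · exact absurd ((dotProduct_self_eq_zero).mp h.symm) hz
  rw [hzz, hdec s, hdec k]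
  exact key_scalar lam c k s hk hs hsk hT (by rw [← hdec s]; exact hpos)
end
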